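/- arXiv:2405.03310 — 2 statements merged into one kernel-verified Lean document; each statement's English description precedes it below -/
import Mathlib

section
/- Let Γ be a locally semicomplete commutative weakly distance-regular digraph such that (1,2) is pure and (1,1) ∈ ∂̃(Γ). Then for all vertices x,y,z with ∂̃(x,y)=(1,1) and ∂̃(y,z)=(1,2), one has ∂̃(x,z)=(1,2) (i.e. Γ_{1,1}Γ_{1,2}={Γ_{1,2}}). -/
variable {V : Type*}

/-- There is a directed walk of length `n` from `x` to `y` in the digraph with arc relation `A`. -/
def HasWalk (A : V → V → Prop) : ℕ → V → V → Prop
  | 0, x, y => x = y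
  | n + 1, x, y => ∃ z, A x z ∧ HasWalk A n z y

/-- The distance `∂(x,y)`: the length of a shortest directed path from `x` to `y`. -/
noncomputable def ddist (A : V → V → Prop) (x y : V) : ℕ :=
  sInf {n : ℕ | HasWalk A n x y}

/-- The two-way distance `∂̃(x,y) = (∂(x,y), ∂(y,x))`. -/
noncomputable def tdist (A : V → V → Prop) (x y : V) : ℕ × ℕ :=
  (ddist A x y, ddist A y x)

/-- The two-way distance set `∂̃(Γ)`. -/
def tset (A : V → V → Prop) : Set (ℕ × ℕ) :=
  {d : ℕ × ℕ | ∃ x y : V, tdist A x y = d}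

/-- A (finite) weakly distance-regular digraph: a loopless strongly connected digraph
together with its intersection numbers `p h i j = p^{h}_{i,j}`, where
`p h i j = 0` by convention whenever one of `h`, `i`, `j` is not a two-way distance. -/
structure WDRDigraph (V : Type*) [Fintype V] where
  Adj : V → V → Prop
  loopless : ∀ v : V, ¬ Adj v v
  strongly_connected : ∀ x y : V, ∃ n : ℕ, HasWalk Adj n x y
  p : ℕ × ℕ → ℕ × ℕ → ℕ × ℕ → ℕ
  card_inter : ∀ (i j : ℕ × ℕ) (x y : V),
    {z : V | tdist Adj x z = i ∧ tdist Adj z y = j}.ncard = p (tdist Adj x y) i j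
  p_not_in : ∀ h i j : ℕ × ℕ,
    h ∉ tset Adj ∨ i ∉ tset Adj ∨ j ∉ tset Adj → p h i j = 0

variable [Fintype V]

/-- A weakly distance-regular digraph is commutative if `p^{h}_{i,j} = p^{h}_{j,i}`
for all two-way distances `h`, `i`, `j`. -/
def WDRDigraph.Commutative (G : WDRDigraph V) : Prop :=
  ∀ h i j : ℕ × ℕ, h ∈ tset G.Adj → i ∈ tset G.Adj → j ∈ tset G.Adj →
    G.p h i j = G.p h j i

/-- A digraph is semicomplete if any two distinct vertices are joined by at least one arc. -/
def Semicomplete (A : V → V → Prop) : Prop :=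
  ∀ x y : V, x ≠ y → A x y ∨ A y x

/-- A digraph is locally semicomplete if the out-neighbourhood and the in-neighbourhood of
every vertex induce semicomplete digraphs. -/
def LocallySemicomplete (A : V → V → Prop) : Prop :=
  ∀ x y z : V, y ≠ z →
    ((A x y → A x z → (A y z ∨ A z y)) ∧ (A y x → A z x → (A y z ∨ A z y)))

/-- A circuit of length `q`, encoded as a function `ZMod q → V` each of whose
consecutive pairs (cyclically) is an arc. -/
def IsCircuit (A : V → V → Prop) (q : ℕ) (c : ZMod q → V) : Prop :=
  ∀ i : ZMod q, A (c i) (c (i + 1))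

/-- The arc `(x, y)` (of type `(1, q-1)`) is pure: every circuit of length `q`
containing it consists of arcs of type `(1, q-1)`. -/
def PureArc (A : V → V → Prop) (q : ℕ) (x y : V) : Prop :=
  ∀ c : ZMod q → V, IsCircuit A q c → c 0 = x → c 1 = y →
    ∀ i : ZMod q, tdist A (c i) (c (i + 1)) = (1, q - 1)

/-- `(1, q-1)` is pure: every arc of type `(1, q-1)` is pure. -/
def TypePure (A : V → V → Prop) (q : ℕ) : Prop :=
  ∀ x y : V, tdist A x y = (1, q - 1) → PureArc A q x y

/-- `(1, q-1)` is mixed: some arc of type `(1, q-1)` is not pure. -/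
def TypeMixed (A : V → V → Prop) (q : ℕ) : Prop :=
  ∃ x y : V, tdist A x y = (1, q - 1) ∧ ¬ PureArc A q x y

/-- The number `k_i` of vertices at two-way distance `i` from `x`
(independent of `x` in a weakly distance-regular digraph). -/
noncomputable def kval (A : V → V → Prop) (i : ℕ × ℕ) (x : V) : ℕ :=
  {y : V | tdist A x y = i}.ncard


section Helpers
variable {A : V → V → Prop} {x y : V}

lemma hasWalk_one_iff : HasWalk A 1 x y ↔ A x y := by
  constructor
  · rintro ⟨z, hz, h0⟩
    have : z = y := h0
    exact this ▸ hz
  · intro h; exact ⟨y, h, rfl⟩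

lemma ddist_eq_one (hne : x ≠ y) (h : A x y) : ddist A x y = 1 := by
  have h1 : (1:ℕ) ∈ {n | HasWalk A n x y} := hasWalk_one_iff.2 h
  have hle := Nat.sInf_le h1
  have h0 : sInf {n : ℕ | HasWalk A n x y} ≠ 0 := by
    intro hz
    have hm := Nat.sInf_mem (⟨1, h1⟩ : Set.Nonempty {n : ℕ | HasWalk A n x y})
    rw [hz] at hm
    exact hne hm
  unfold ddist
  omega

lemma adj_of_ddist_one (h : ddist A x y = 1) : A x y := by
  have hpos : 0 < sInf {n : ℕ | HasWalk A n x y} := by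
    unfold ddist at h; omega
  have hne := Nat.nonempty_of_pos_sInf hpos
  have hm := Nat.sInf_mem hne
  unfold ddist at h
  rw [h] at hm
  exact hasWalk_one_iff.1 hm

lemma ne_of_ddist_one (h : ddist A x y = 1) : x ≠ y := by
  intro he
  have h0 : (0:ℕ) ∈ {n | HasWalk A n x y} := he
  have := Nat.sInf_le h0
  unfold ddist at h
  omega

lemma not_adj_of_ddist_two (h : ddist A x y = 2) : ¬ A x y := by
  intro ha
  have h1 : (1:ℕ) ∈ {n | HasWalk A n x y} := hasWalk_one_iff.2 ha
  have := Nat.sInf_le h1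
  unfold ddist at h
  omega

lemma ne_of_ddist_two (h : ddist A x y = 2) : x ≠ y := by
  intro he
  have h0 : (0:ℕ) ∈ {n | HasWalk A n x y} := he
  have := Nat.sInf_le h0
  unfold ddist at h
  omega

lemma hasWalk_two_of_ddist_two (h : ddist A x y = 2) : ∃ w, A x w ∧ A w y := by
  have hpos : 0 < sInf {n : ℕ | HasWalk A n x y} := by
    unfold ddist at h; omega
  have hne := Nat.nonempty_of_pos_sInf hpos
  have hm := Nat.sInf_mem hne
  unfold ddist at h
  rw [h] at hm
  obtain ⟨w, hw, hwy⟩ := hm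
  exact ⟨w, hw, hasWalk_one_iff.1 hwy⟩

lemma ddist_eq_two (hne : x ≠ y) (hna : ¬ A x y) (h2 : ∃ w, A x w ∧ A w y) :
    ddist A x y = 2 := by
  obtain ⟨w, hw, hwy⟩ := h2
  have h2' : (2:ℕ) ∈ {n | HasWalk A n x y} := ⟨w, hw, hasWalk_one_iff.2 hwy⟩
  have hle := Nat.sInf_le h2'
  have hmem := Nat.sInf_mem (⟨2, h2'⟩ : Set.Nonempty {n : ℕ | HasWalk A n x y})
  have h0 : sInf {n : ℕ | HasWalk A n x y} ≠ 0 := by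
    intro hz; rw [hz] at hmem; exact hne hmem
  have h1 : sInf {n : ℕ | HasWalk A n x y} ≠ 1 := by
    intro hz; rw [hz] at hmem; exact hna (hasWalk_one_iff.1 hmem)
  unfold ddist
  omega

lemma zmod3_cases : ∀ i : ZMod 3, i = 0 ∨ i = 1 ∨ i = 2 := by decide

/-- From a 3-circuit `a → b → d → a` whose arc `(a,b)` is of type `(1,2)`,
purity gives that the other two arcs are also of type `(1,2)`. -/
lemma pure_triangle (hp : TypePure A 3) {a b d : V}
    (hab : tdist A a b = (1, 2)) (hAab : A a b) (hbd : A b d) (hda : A d a) :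
    tdist A b d = (1, 2) ∧ tdist A d a = (1, 2) := by
  classical
  set c : ZMod 3 → V := fun i => if i = 0 then a else if i = 1 then b else d with hc
  have hc0 : c 0 = a := by simp [hc]
  have hc1 : c 1 = b := by simp [hc]
  have hc2 : c 2 = d := by simp only [hc]; rw [if_neg (show ¬((2:ZMod 3) = 0) by decide), if_neg (show ¬((2:ZMod 3) = 1) by decide)]
  have hcirc : IsCircuit A 3 c := by
    intro i
    rcases zmod3_cases i with rfl | rfl | rfl
    · rw [show ((0:ZMod 3) + 1) = 1 from by decide, hc0, hc1]; exact hAab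
    · rw [show ((1:ZMod 3) + 1) = 2 from by decide, hc1, hc2]; exact hbd
    · rw [show ((2:ZMod 3) + 1) = 0 from by decide, hc2, hc0]; exact hda
  have hpa := hp a b (by exact_mod_cast hab) c hcirc hc0 hc1
  have h1 := hpa 1
  have h2 := hpa 2
  rw [show ((1:ZMod 3) + 1) = 2 from by decide, hc1, hc2] at h1
  rw [show ((2:ZMod 3) + 1) = 0 from by decide, hc2, hc0] at h2
  exact ⟨by exact_mod_cast h1, by exact_mod_cast h2⟩

end Helpers

/-- in a locally semicomplete commutative weakly distance-regular digraph such that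
`(1,2)` is pure and `(1,1) ∈ ∂̃(Γ)`, one has `Γ_{1,1}Γ_{1,2} = {Γ_{1,2}}`. -/
theorem statement3 [Nonempty V] (G : WDRDigraph V)
    (hls : LocallySemicomplete G.Adj) (hcomm : G.Commutative)
    (hpure : TypePure G.Adj 3)
    (h11 : ((1, 1) : ℕ × ℕ) ∈ tset G.Adj) :
    ∀ x y z : V, tdist G.Adj x y = (1, 1) → tdist G.Adj y z = (1, 2) →
      tdist G.Adj x z = (1, 2) := by
  classical
  intro x y z hxy hyz
  set A := G.Adj with hA
  -- unpack the two-way distances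
  have hxy1 : ddist A x y = 1 := congrArg Prod.fst hxy
  have hyx1 : ddist A y x = 1 := congrArg Prod.snd hxy
  have hyz1 : ddist A y z = 1 := congrArg Prod.fst hyz
  have hzy2 : ddist A z y = 2 := congrArg Prod.snd hyz
  have hAxy : A x y := adj_of_ddist_one hxy1
  have hAyx : A y x := adj_of_ddist_one hyx1
  have hAyz : A y z := adj_of_ddist_one hyz1
  have hnAzy : ¬ A z y := not_adj_of_ddist_two hzy2
  have hxnez : x ≠ z := by
    intro he; rw [he] at hxy1; omega
  -- z → x is impossible by purity of the arc (y, z) in the circuit y → z → x → y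
  have hnAzx : ¬ A z x := by
    intro hAzx
    have := (pure_triangle hpure hyz hAyz hAzx hAxy).2
    rw [hxy] at this
    exact absurd (congrArg Prod.snd this) (by norm_num)
  -- local semicompleteness at y (out-neighbours x and z) gives x → z
  have hAxz : A x z := by
    rcases ((hls y x z hxnez).1 hAyx hAyz) with h | h
    · exact h
    · exact absurd h hnAzx
  -- pick w with z → w → y
  obtain ⟨w, hAzw, hAwy⟩ := hasWalk_two_of_ddist_two hzy2
  have hwnex : w ≠ x := fun he => hnAzx (he ▸ hAzw)
  have hwney : w ≠ y := fun he => G.loopless y (he ▸ hAwy)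
  -- w → x by local semicompleteness at y (in-neighbours w and x) plus purity
  have hAwx : A w x := by
    rcases ((hls y w x hwnex).2 hAwy hAxy) with h | h
    · exact h
    · -- A x w leads to a contradiction
      exfalso
      have hwy1 : ddist A w y = 1 := ddist_eq_one hwney hAwy
      have hywle : ddist A y w ≤ 2 :=
        Nat.sInf_le (⟨z, hAyz, hasWalk_one_iff.2 hAzw⟩ : HasWalk A 2 y w)
      have hywpos : ddist A y w ≠ 0 := by
        intro hz
        have hpos : (0:ℕ) ∈ {n | HasWalk A n y w} := by
          have hne : Set.Nonempty {n : ℕ | HasWalk A n y w} :=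
            ⟨2, ⟨z, hAyz, hasWalk_one_iff.2 hAzw⟩⟩
          have := Nat.sInf_mem hne
          rw [show sInf {n : ℕ | HasWalk A n y w} = 0 from hz] at this
          exact this
        exact hwney.symm hpos
      rcases (by omega : ddist A y w = 1 ∨ ddist A y w = 2) with h1 | h2
      · -- y → w : circuit y → z → w → y contradicts purity of (y,z)
        have hAyw : A y w := adj_of_ddist_one h1
        have := (pure_triangle hpure hyz hAyz hAzw hAwy).2
        have : ddist A y w = 2 := congrArg Prod.snd this
        omega
      · -- tdist w y = (1,2): circuit w → y → x → w contradicts tdist y x = (1,1)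
        have hwy : tdist A w y = (1, 2) := by
          rw [tdist, hwy1, h2]
        have := (pure_triangle hpure hwy hAwy hAyx h).1
        have : ddist A x y = 2 := congrArg Prod.snd this
        omega
  -- conclude
  have hxz1 : ddist A x z = 1 := ddist_eq_one hxnez hAxz
  have hzx2 : ddist A z x = 2 :=
    ddist_eq_two (Ne.symm hxnez) hnAzx ⟨w, hAzw, hAwx⟩
  rw [tdist, hxz1, hzx2]
end

section
/- Let Γ be a locally semicomplete commutative weakly distance-regular digraph and let q > 3 be such that (1,q-1) ∈ ∂̃(Γ) and (1,q-1) is pure. Then: (1) p^{(2,q-2)}_{(1,q-1),(1,q-1)} = k_{1,q-1}; (2) for every l with 1 ≤ l ≤ q-1 and every path (w_0,w_1,…,w_l) all of whose arcs are of type (1,q-1), ∂̃(w_0,w_l)=(l,q-l) (i.e. Γ_{1,q-1}^l = {Γ_{l,q-l}} for 1 ≤ l < q); (3) for all vertices x,y,z with ∂̃(x,y)=(2,q-2) and ∂̃(y,z)=(q-1,1), ∂̃(x,z)=(1,q-1) (i.e. Γ_{2,q-2}Γ_{q-1,1}={Γ_{1,q-1}}); (4) if p^{(1,r-1)}_{(1,q-1),(q-1,1)}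 ≠ 0 for some r, then for all vertices x,y,z with ∂̃(x,y)=(1,r-1) and ∂̃(y,z)=(1,q-1), one has ∂̃(x,z)=(1,q-1) (i.e. Γ_{1,r-1}Γ_{1,q-1}={Γ_{1,q-1}}). -/
variable {V : Type*}

variable [Fintype V]

/-!
A pure arc closes up, along a shortest path back, to a circuit of length `q` all of whose arcs
have type `(1, q-1)`; along such a pure circuit the two-way distances are `(l, q-l)`.

For (1), the out-neighbours of type `(1, q-1)` of `x` span a semicomplete digraph, so one of them,
`y₀`, reaches all the others inside it. Let `b` follow `y₀` on a pure circuit through `x → y₀`.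
If `u → b` has type `(1, q-1)` and `u → v`, local semicompleteness at `u` gives `v → b`, and the
circuit `x → v → b → ⋯ → x` of length `q` is pure. So every out-neighbour of type `(1, q-1)` of
`x` is a common neighbour of `x` and `b`.

Since `k_{1,q-1} = k_{q-1,1}` by double counting, (1) says that for `∂̃(a,b) = (2,q-2)` the common
neighbours exhaust both `Γ_{1,q-1}(a)` and `Γ_{q-1,1}(b)`. This is (3), and it gives
`Γ_{1,q-1}² = {Γ_{2,q-2}}`; (2) and (4) follow by walking along pure circuits.
-/

section Digraph

omit [Fintype V]

variable {A : V → V → Prop}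

section Walks

theorem HasWalk.append : ∀ {m n : ℕ} {x y z : V},
    HasWalk A m x y → HasWalk A n y z → HasWalk A (m + n) x z
  | 0, _, _, _, _, rfl, h => by rwa [zero_add]
  | m + 1, _, _, _, _, ⟨w, hxw, h⟩, h' => by
    rw [add_right_comm]
    exact ⟨w, hxw, h.append h'⟩

theorem HasWalk.exists_seq : ∀ {n : ℕ} {x y : V}, HasWalk A n x y →
    ∃ f : ℕ → V, f 0 = x ∧ f n = y ∧ ∀ i < n, A (f i) (f (i + 1))
  | 0, x, _, rfl => ⟨fun _ => x, rfl, rfl, by simp⟩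
  | n + 1, x, _, ⟨z, hxz, h⟩ => by
    obtain ⟨f, hf0, hfn, hf⟩ := h.exists_seq
    refine ⟨fun i => Nat.casesOn i x f, rfl, hfn, fun i hi => ?_⟩
    cases i with
    | zero => simpa [hf0] using hxz
    | succ i => exact hf i (by omega)

theorem tdist_eq_iff {x y : V} {a b : ℕ} :
    tdist A x y = (a, b) ↔ ddist A x y = a ∧ ddist A y x = b :=
  Prod.ext_iff

theorem ddist_le_of_hasWalk {n : ℕ} {x y : V} (h : HasWalk A n x y) : ddist A x y ≤ n :=
  Nat.sInf_le h

theorem ddist_le_one_of_adj {x y : V} (h : A x y) : ddist A x y ≤ 1 :=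
  ddist_le_of_hasWalk ⟨y, h, rfl⟩

theorem tdist_self (x : V) : tdist A x x = (0, 0) := by
  have h : ddist A x x = 0 := Nat.le_zero.mp (ddist_le_of_hasWalk (show HasWalk A 0 x x from rfl))
  exact tdist_eq_iff.2 ⟨h, h⟩

variable (hA : ∀ x y : V, ∃ n, HasWalk A n x y)
include hA

theorem hasWalk_ddist (x y : V) : HasWalk A (ddist A x y) x y :=
  Nat.sInf_mem (hA x y)

theorem ddist_triangle (x y z : V) : ddist A x z ≤ ddist A x y + ddist A y z :=
  ddist_le_of_hasWalk ((hasWalk_ddist hA x y).append (hasWalk_ddist hA y z))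

theorem adj_of_tdist_eq {x y : V} {b : ℕ} (h : tdist A x y = (1, b)) : A x y := by
  obtain ⟨z, hxz, rfl⟩ : HasWalk A 1 x y := (tdist_eq_iff.1 h).1 ▸ hasWalk_ddist hA x y
  exact hxz

end Walks

section Circuits

variable {q : ℕ}

theorem IsCircuit.hasWalk {c : ZMod q → V} (hc : IsCircuit A q c) :
    ∀ (m : ℕ) {i j : ZMod q}, i + m = j → HasWalk A m (c i) (c j)
  | 0, i, j, h => by rw [← h, Nat.cast_zero, add_zero]; rfl
  | m + 1, i, j, h => ⟨c (i + 1), hc i, hc.hasWalk m (by rw [← h]; push_cast; ring)⟩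

theorem isCircuit_of_seq [NeZero q] {f : ℕ → V} (hfq : f q = f 0)
    (hf : ∀ i < q, A (f i) (f (i + 1))) : IsCircuit A q (fun i => f i.val) := by
  intro i
  have hsucc : (i + 1).val = (i.val + 1) % q := by
    rw [← ZMod.val_natCast, Nat.cast_add, ZMod.natCast_zmod_val, Nat.cast_one]
  have hi := ZMod.val_lt i
  rcases (show i.val + 1 < q ∨ i.val + 1 = q by omega) with hlt | heq
  · simpa only [hsucc, Nat.mod_eq_of_lt hlt] using hf i.val hi
  · simpa only [hsucc, heq, Nat.mod_self, ← hfq] using hf i.val hi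

theorem exists_isCircuit_of_hasWalk {n : ℕ} (hn : n < q) (f : ℕ → V)
    (hf : ∀ i < n, A (f i) (f (i + 1))) (hback : HasWalk A (q - n) (f n) (f 0)) :
    ∃ c : ZMod q → V, IsCircuit A q c ∧ ∀ i ≤ n, c i = f i := by
  have : NeZero q := ⟨by omega⟩
  obtain ⟨p, hp0, hpq, hp⟩ := hback.exists_seq
  set F : ℕ → V := fun i => if i ≤ n then f i else p (i - n) with hF
  have hFq : F q = F 0 := by simp [hF, show ¬ q ≤ n by omega, hpq]
  have hFadj : ∀ i < q, A (F i) (F (i + 1)) := by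
    intro i hi
    rcases lt_trichotomy i n with h | rfl | h
    · simpa [hF, h.le, Nat.succ_le_of_lt h] using hf i h
    · simpa [hF, ← hp0] using hp 0 (by omega)
    · simpa [hF, h.not_ge, show ¬ i + 1 ≤ n by omega, Nat.sub_add_comm h.le]
        using hp (i - n) (by omega)
  refine ⟨_, isCircuit_of_seq hFq hFadj, fun i hi => ?_⟩
  simp [hF, ZMod.val_natCast_of_lt (hi.trans_lt hn), hi]

end Circuits

section PureCircuits

variable {q : ℕ}

def IsPureCircuit (A : V → V → Prop) (q : ℕ) (c : ZMod q → V) : Prop :=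
  ∀ i, tdist A (c i) (c (i + 1)) = (1, q - 1)

variable (hA : ∀ x y : V, ∃ n, HasWalk A n x y)
include hA

theorem IsPureCircuit.isCircuit {c : ZMod q → V} (hc : IsPureCircuit A q c) :
    IsCircuit A q c :=
  fun i => adj_of_tdist_eq hA (hc i)

/-- Going once around a pure circuit, the lower bounds come from the arcs `c (i+1) → c i` and
`c (i+l+1) → c (i+l)` having backward distance `q - 1`. -/
theorem IsPureCircuit.tdist_add {c : ZMod q → V} (hc : IsPureCircuit A q c) (i : ZMod q)
    {l : ℕ} (hl : 0 < l) (hlq : l < q) : tdist A (c i) (c (i + l)) = (l, q - l) := by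
  have hwalk := (hc.isCircuit hA).hasWalk
  have hfwd : ddist A (c i) (c (i + l)) ≤ l := ddist_le_of_hasWalk (hwalk l rfl)
  have hbwd : ddist A (c (i + l)) (c i) ≤ q - l := by
    refine ddist_le_of_hasWalk (hwalk (q - l) ?_)
    rw [Nat.cast_sub hlq.le, ZMod.natCast_self]; ring
  have hfwd' : ddist A (c (i + l + 1)) (c i) ≤ q - l - 1 := by
    refine ddist_le_of_hasWalk (hwalk (q - l - 1) ?_)
    rw [Nat.cast_sub (by omega), Nat.cast_sub hlq.le, ZMod.natCast_self]; ring
  have hbwd' : ddist A (c (i + 1)) (c (i + l)) ≤ l - 1 := by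
    refine ddist_le_of_hasWalk (hwalk (l - 1) ?_)
    rw [Nat.cast_sub (by omega)]; ring
  have h₁ := (tdist_eq_iff.1 (hc i)).2
  have h₂ := (tdist_eq_iff.1 (hc (i + l))).2
  have t₁ := ddist_triangle hA (c (i + 1)) (c (i + l)) (c i)
  have t₂ := ddist_triangle hA (c (i + l + 1)) (c i) (c (i + l))
  exact tdist_eq_iff.2 ⟨by omega, by omega⟩

end PureCircuits

section TypePure

variable {q : ℕ} (hpure : TypePure A q)
include hpure

theorem TypePure.exists_isPureCircuit_of_hasWalk {n : ℕ} (hn : 0 < n) (hnq : n < q)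
    (f : ℕ → V) (hf : ∀ i < n, A (f i) (f (i + 1))) (h01 : tdist A (f 0) (f 1) = (1, q - 1))
    (hback : HasWalk A (q - n) (f n) (f 0)) :
    ∃ c : ZMod q → V, IsPureCircuit A q c ∧ ∀ i ≤ n, c i = f i := by
  obtain ⟨c, hc, hcf⟩ := exists_isCircuit_of_hasWalk hnq f hf hback
  have hc0 : c 0 = f 0 := by simpa using hcf 0 hn.le
  have hc1 : c 1 = f 1 := by simpa using hcf 1 hn
  exact ⟨c, hpure _ _ (hc0 ▸ hc1 ▸ h01) c hc rfl rfl, hcf⟩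

variable (hA : ∀ x y : V, ∃ n, HasWalk A n x y)
include hA

theorem TypePure.exists_isPureCircuit (hq : 1 < q) {x y : V} (hxy : tdist A x y = (1, q - 1)) :
    ∃ c : ZMod q → V, IsPureCircuit A q c ∧ c 0 = x ∧ c 1 = y := by
  have hback : HasWalk A (q - 1) y x := (tdist_eq_iff.1 hxy).2 ▸ hasWalk_ddist hA y x
  obtain ⟨c, hc, hcf⟩ := hpure.exists_isPureCircuit_of_hasWalk one_pos hq
    (fun i => if i = 0 then x else y) (by simpa using adj_of_tdist_eq hA hxy) (by simpa)
    (by simpa)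
  exact ⟨c, hc, by simpa using hcf 0, by simpa using hcf 1⟩

theorem TypePure.tdist_of_hasWalk (hq : 2 < q) {x y z : V} (hxy : tdist A x y = (1, q - 1))
    (hyz : A y z) (hzx : HasWalk A (q - 2) z x) :
    tdist A y z = (1, q - 1) ∧ tdist A x z = (2, q - 2) := by
  obtain ⟨c, hc, hcf⟩ := hpure.exists_isPureCircuit_of_hasWalk two_pos hq
    (fun i => if i = 0 then x else if i = 1 then y else z)
    (fun i hi => by interval_cases i <;> simp [adj_of_tdist_eq hA hxy, hyz]) (by simpa)
    (by simpa)
  have hc0 : c 0 = x := by simpa using hcf 0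
  have hc1 : c 1 = y := by simpa using hcf 1
  have hc2 : c 2 = z := by simpa using hcf 2
  constructor
  · simpa [hc1, one_add_one_eq_two, hc2] using hc 1
  · simpa [hc0, hc2] using hc.tdist_add hA 0 (l := 2) two_pos hq

theorem LocallySemicomplete.tdist_eq_of_adj (hls : LocallySemicomplete A) (hq : 3 < q)
    {x b u v : V} (hxb : tdist A x b = (2, q - 2)) (hxv : tdist A x v = (1, q - 1))
    (huv : A u v) (hub : tdist A u b = (1, q - 1)) :
    tdist A v b = (1, q - 1) := by
  have hd := tdist_eq_iff.1 hxb
  have hv_ne : v ≠ b := by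
    rintro rfl
    have := (tdist_eq_iff.1 hxv).1
    omega
  have hx_ne : x ≠ b := by
    rintro rfl
    have := (tdist_eq_iff.1 (tdist_self (A := A) x)).1
    omega
  rcases (hls u v b hv_ne).1 huv (adj_of_tdist_eq hA hub) with hvb | hbv
  · have hback : HasWalk A (q - 2) b x := hd.2 ▸ hasWalk_ddist hA b x
    exact (hpure.tdist_of_hasWalk hA (by omega) hxv hvb hback).1
  · -- `x` and `b` would be in-neighbours of `v`, hence adjacent, while `q - 2 ≠ 1`
    exfalso
    rcases (hls v x b hx_ne).2 (adj_of_tdist_eq hA hxv) hbv with h | h <;>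
      · have := ddist_le_one_of_adj h
        omega

end TypePure

end Digraph

open Finset in
theorem exists_forall_reflTransGen_of_semicomplete {α : Type*} {R : α → α → Prop}
    {s : Finset α} (hs : s.Nonempty) (htot : ∀ a ∈ s, ∀ b ∈ s, a ≠ b → R a b ∨ R b a) :
    ∃ a ∈ s, ∀ b ∈ s, Relation.ReflTransGen (fun u v => R u v ∧ v ∈ s) a b := by
  induction hs using Finset.Nonempty.cons_induction with
  | singleton a => exact ⟨a, mem_singleton_self a, fun b hb => by rw [mem_singleton.1 hb]⟩
  | cons a s ha hs ih =>
    obtain ⟨c, hc, hcs⟩ :=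
      ih fun x hx y hy => htot x (mem_cons_of_mem hx) y (mem_cons_of_mem hy)
    have hcs' : ∀ b ∈ s, Relation.ReflTransGen (fun u v => R u v ∧ v ∈ cons a s ha) c b :=
      fun b hb =>
        Relation.ReflTransGen.mono (fun _ _ h => ⟨h.1, mem_cons_of_mem h.2⟩) _ _ (hcs b hb)
    rcases htot a (mem_cons_self a s) c (mem_cons_of_mem hc) (by rintro rfl; exact ha hc)
      with hac | hca
    · refine ⟨a, mem_cons_self a s, fun b hb => ?_⟩
      rcases mem_cons.1 hb with rfl | hb
      · rfl
      · exact .head ⟨hac, mem_cons_of_mem hc⟩ (hcs' b hb)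
    · refine ⟨c, mem_cons_of_mem hc, fun b hb => ?_⟩
      rcases mem_cons.1 hb with rfl | hb
      · exact .single ⟨hca, mem_cons_self _ _⟩
      · exact hcs' b hb

theorem eq_of_forall_ncard_setOf_eq {α : Type*} [Finite α] [Nonempty α] (r : α → α → Prop)
    {m n : ℕ} (hm : ∀ a, {b | r a b}.ncard = m) (hn : ∀ b, {a | r a b}.ncard = n) : m = n := by
  classical
  have := Fintype.ofFinite α
  have hcount := Finset.card_mul_eq_card_mul r (s := Finset.univ) (t := Finset.univ)
    (m := m) (n := n)
    (fun a _ => by rw [← hm a, ← Set.ncard_coe_finset]; simp [Finset.bipartiteAbove])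
    (fun b _ => by rw [← hn b, ← Set.ncard_coe_finset]; simp [Finset.bipartiteBelow])
  exact Nat.eq_of_mul_eq_mul_left Finset.univ_nonempty.card_pos hcount

namespace WDRDigraph

variable (G : WDRDigraph V)

theorem kval_eq_p_zero (i : ℕ × ℕ) (x : V) : kval G.Adj i x = G.p (0, 0) i i.swap := by
  rw [kval, ← tdist_self (A := G.Adj) x, ← G.card_inter]
  congr 1
  ext y
  exact ⟨fun h => ⟨h, by rw [← h]; rfl⟩, And.left⟩

theorem kval_eq_kval (i : ℕ × ℕ) (x y : V) : kval G.Adj i x = kval G.Adj i y := by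
  rw [kval_eq_p_zero, kval_eq_p_zero]

theorem ncard_setOf_tdist_eq_left (i : ℕ × ℕ) (y : V) :
    {x | tdist G.Adj x y = i}.ncard = kval G.Adj i.swap y := by
  congr 1
  ext x
  exact ⟨fun h => by rw [← h]; rfl, fun h => by rw [← Prod.swap_swap i, ← h]; rfl⟩

theorem kval_swap (i : ℕ × ℕ) (x : V) : kval G.Adj i.swap x = kval G.Adj i x :=
  have : Nonempty V := ⟨x⟩
  (eq_of_forall_ncard_setOf_eq (fun y z => tdist G.Adj y z = i) (fun y => G.kval_eq_kval i y x)
    fun z => (G.ncard_setOf_tdist_eq_left i z).trans (G.kval_eq_kval i.swap z x)).symm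

theorem kval_pos {i : ℕ × ℕ} (hi : i ∈ tset G.Adj) (x : V) : 0 < kval G.Adj i x := by
  obtain ⟨y, z, h⟩ := hi
  rw [G.kval_eq_kval i x y]
  exact (Set.ncard_pos (Set.toFinite _)).2 ⟨z, h⟩

variable {G} {q : ℕ} (hls : LocallySemicomplete G.Adj) (hq : 3 < q)
  (hqT : ((1, q - 1) : ℕ × ℕ) ∈ tset G.Adj) (hpure : TypePure G.Adj q)
include hls hq hqT hpure

theorem p_two_eq_kval (x : V) :
    G.p (2, q - 2) (1, q - 1) (1, q - 1) = kval G.Adj (1, q - 1) x := by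
  classical
  have hA := G.strongly_connected
  set S := {y | tdist G.Adj x y = (1, q - 1)} with hS
  obtain ⟨y₀, hy₀, hreach⟩ := exists_forall_reflTransGen_of_semicomplete (R := G.Adj)
    (s := Finset.univ.filter (· ∈ S))
    (by
      obtain ⟨y, hy⟩ := (Set.ncard_pos (Set.toFinite S)).1 (G.kval_pos hqT x)
      exact ⟨y, by simpa using hy⟩)
    (fun a ha b hb hab => (hls x a b hab).1 (adj_of_tdist_eq hA (by simpa [hS] using ha))
      (adj_of_tdist_eq hA (by simpa [hS] using hb)))
  obtain ⟨c, hc, hc0, hc1⟩ := hpure.exists_isPureCircuit hA (by omega) (by simpa [hS] using hy₀)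
  have hxb : tdist G.Adj x (c 2) = (2, q - 2) := by
    simpa [hc0] using hc.tdist_add hA 0 (l := 2) two_pos (by omega)
  have hall : ∀ v ∈ S, tdist G.Adj v (c 2) = (1, q - 1) := by
    intro v hv
    have hy₀v := hreach v (by simpa using hv)
    clear hv
    induction hy₀v with
    | refl => simpa [hc1, one_add_one_eq_two] using hc 1
    | tail _ h ih => exact hls.tdist_eq_of_adj hpure hA hq hxb (by simpa [hS] using h.2) h.1 ih
  have hset : {z | tdist G.Adj x z = (1, q - 1) ∧ tdist G.Adj z (c 2) = (1, q - 1)} = S :=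
    Set.ext fun z => ⟨And.left, fun hz => ⟨hz, hall z hz⟩⟩
  rw [← hxb, ← G.card_inter, hset]
  rfl

theorem tdist_right_of_tdist_two {a b w : V} (hab : tdist G.Adj a b = (2, q - 2))
    (haw : tdist G.Adj a w = (1, q - 1)) : tdist G.Adj w b = (1, q - 1) := by
  have hT : {z | tdist G.Adj a z = (1, q - 1) ∧ tdist G.Adj z b = (1, q - 1)} =
      {z | tdist G.Adj a z = (1, q - 1)} :=
    Set.eq_of_subset_of_ncard_le (fun z hz => hz.1)
      (by rw [G.card_inter, hab, p_two_eq_kval hls hq hqT hpure a]; rfl)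
  exact (hT.symm.subset haw).2

theorem tdist_left_of_tdist_two {a b w : V} (hab : tdist G.Adj a b = (2, q - 2))
    (hwb : tdist G.Adj w b = (1, q - 1)) : tdist G.Adj a w = (1, q - 1) := by
  have hT : {z | tdist G.Adj a z = (1, q - 1) ∧ tdist G.Adj z b = (1, q - 1)} =
      {z | tdist G.Adj z b = (1, q - 1)} :=
    Set.eq_of_subset_of_ncard_le (fun z hz => hz.2)
      (by rw [G.card_inter, hab, p_two_eq_kval hls hq hqT hpure b, ncard_setOf_tdist_eq_left,
        kval_swap])
  exact (hT.symm.subset hwb).1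

theorem tdist_two_of_tdist_one {x y z : V} (hxy : tdist G.Adj x y = (1, q - 1))
    (hyz : tdist G.Adj y z = (1, q - 1)) : tdist G.Adj x z = (2, q - 2) := by
  have hA := G.strongly_connected
  obtain ⟨c, hc, hc0, hc1⟩ := hpure.exists_isPureCircuit hA (by omega) hyz
  have hy : tdist G.Adj (c (-2)) y = (2, q - 2) := by
    simpa [hc0] using hc.tdist_add hA (-2) (l := 2) two_pos (by omega)
  have hx : tdist G.Adj (c (-2)) x = (1, q - 1) :=
    tdist_left_of_tdist_two hls hq hqT hpure hy hxy
  have hzx : HasWalk G.Adj (q - 3 + 1) z x := by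
    refine HasWalk.append (hc1 ▸ (hc.isCircuit hA).hasWalk (q - 3) ?_)
      ⟨x, adj_of_tdist_eq hA hx, rfl⟩
    rw [Nat.cast_sub (by omega), ZMod.natCast_self]
    ring
  rw [show q - 3 + 1 = q - 2 by omega] at hzx
  exact (hpure.tdist_of_hasWalk hA (by omega) hxy (adj_of_tdist_eq hA hyz) hzx).2

/-- A path `w 0 → ⋯ → w l` of arcs of type `(1, q-1)` stays parallel to a pure circuit through
`w 0 → w 1`, which closes it up into a pure circuit of length `q`. -/
theorem tdist_of_path {l : ℕ} (hl : 1 ≤ l) (hlq : l ≤ q - 1) (w : ℕ → V)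
    (hw : ∀ i < l, tdist G.Adj (w i) (w (i + 1)) = (1, q - 1)) :
    tdist G.Adj (w 0) (w l) = (l, q - l) := by
  have hA := G.strongly_connected
  obtain ⟨c, hc, hc0, hc1⟩ := hpure.exists_isPureCircuit hA (by omega) (hw 0 hl)
  have hparallel : ∀ j ≤ l, tdist G.Adj (w j) (c (j + 1)) = (1, q - 1) := by
    intro j hj
    induction j with
    | zero => simpa [hc1] using hw 0 hl
    | succ j ih =>
      have hc' : tdist G.Adj (c (j + 1)) (c ((j + 1 : ℕ) + 1)) = (1, q - 1) := by
        simpa using hc (j + 1)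
      exact tdist_right_of_tdist_two hls hq hqT hpure
        (tdist_two_of_tdist_one hls hq hqT hpure (ih (by omega)) hc') (hw j (by omega))
  have hback : HasWalk G.Adj (1 + (q - l - 1)) (w l) (w 0) := by
    refine HasWalk.append ⟨_, adj_of_tdist_eq hA (hparallel l le_rfl), rfl⟩
      (hc0 ▸ (hc.isCircuit hA).hasWalk (q - l - 1) ?_)
    rw [Nat.cast_sub (by omega), Nat.cast_sub (by omega), ZMod.natCast_self]
    ring
  rw [show 1 + (q - l - 1) = q - l by omega] at hback
  obtain ⟨c', hc', hc'w⟩ := hpure.exists_isPureCircuit_of_hasWalk (by omega) (by omega) w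
    (fun i hi => adj_of_tdist_eq hA (hw i hi)) (hw 0 hl) hback
  have hc'0 : c' 0 = w 0 := by simpa using hc'w 0 (Nat.zero_le l)
  simpa [hc'0, hc'w l le_rfl] using hc'.tdist_add hA 0 (l := l) (by omega) (by omega)

theorem tdist_of_p_ne_zero {r : ℕ} (hr : G.p (1, r - 1) (1, q - 1) (q - 1, 1) ≠ 0)
    {x y z : V} (hxy : tdist G.Adj x y = (1, r - 1)) (hyz : tdist G.Adj y z = (1, q - 1)) :
    tdist G.Adj x z = (1, q - 1) := by
  obtain ⟨u, hxu, huy⟩ :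
      {u | tdist G.Adj x u = (1, q - 1) ∧ tdist G.Adj u y = (q - 1, 1)}.Nonempty :=
    Set.nonempty_of_ncard_ne_zero (by rwa [G.card_inter, hxy])
  obtain ⟨v, huv⟩ : {v | tdist G.Adj u v = (1, q - 1)}.Nonempty :=
    Set.nonempty_of_ncard_ne_zero (G.kval_pos hqT u).ne'
  have hyu : tdist G.Adj y u = (1, q - 1) := congrArg Prod.swap huy
  have hzv : tdist G.Adj z v = (1, q - 1) := tdist_right_of_tdist_two hls hq hqT hpure
    (tdist_two_of_tdist_one hls hq hqT hpure hyu huv) hyz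
  exact tdist_left_of_tdist_two hls hq hqT hpure
    (tdist_two_of_tdist_one hls hq hqT hpure hxu huv) hzv

end WDRDigraph

theorem statement14_general (G : WDRDigraph V)
    (hls : LocallySemicomplete G.Adj)
    (q : ℕ) (hq : 3 < q)
    (hqT : ((1, q - 1) : ℕ × ℕ) ∈ tset G.Adj)
    (hpure : TypePure G.Adj q) :
    (∀ x : V, G.p (2, q - 2) (1, q - 1) (1, q - 1) = kval G.Adj (1, q - 1) x) ∧
    (∀ l : ℕ, 1 ≤ l → l ≤ q - 1 → ∀ w : ℕ → V,
      (∀ i < l, tdist G.Adj (w i) (w (i + 1)) = (1, q - 1)) →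
      tdist G.Adj (w 0) (w l) = (l, q - l)) ∧
    (∀ x y z : V, tdist G.Adj x y = (2, q - 2) → tdist G.Adj y z = (q - 1, 1) →
      tdist G.Adj x z = (1, q - 1)) ∧
    (∀ r : ℕ, G.p (1, r - 1) (1, q - 1) (q - 1, 1) ≠ 0 →
      ∀ x y z : V, tdist G.Adj x y = (1, r - 1) → tdist G.Adj y z = (1, q - 1) →
        tdist G.Adj x z = (1, q - 1)) :=
  ⟨WDRDigraph.p_two_eq_kval hls hq hqT hpure,
    fun _ hl hlq w hw => WDRDigraph.tdist_of_path hls hq hqT hpure hl hlq w hw,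
    fun _ _ _ hxy hyz => WDRDigraph.tdist_left_of_tdist_two hls hq hqT hpure hxy
      (congrArg Prod.swap hyz),
    fun _ hr _ _ _ hxy hyz => WDRDigraph.tdist_of_p_ne_zero hls hq hqT hpure hr hxy hyz⟩

/-- in a locally semicomplete commutative weakly distance-regular digraph, if
`q > 3`, `(1,q-1) ∈ ∂̃(Γ)` and `(1,q-1)` is pure, then:
(1) `p^{(2,q-2)}_{(1,q-1),(1,q-1)} = k_{1,q-1}`;
(2) `Γ_{1,q-1}^l = {Γ_{l,q-l}}` for `1 ≤ l < q`;
(3) `Γ_{2,q-2}Γ_{q-1,1} = {Γ_{1,q-1}}`;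
(4) if `Γ_{1,r-1} ∈ Γ_{1,q-1}Γ_{q-1,1}`, then `Γ_{1,r-1}Γ_{1,q-1} = {Γ_{1,q-1}}`. -/
theorem statement14 [Nonempty V] (G : WDRDigraph V)
    (hls : LocallySemicomplete G.Adj) (hcomm : G.Commutative)
    (q : ℕ) (hq : 3 < q)
    (hqT : ((1, q - 1) : ℕ × ℕ) ∈ tset G.Adj)
    (hpure : TypePure G.Adj q) :
    (∀ x : V, G.p (2, q - 2) (1, q - 1) (1, q - 1) = kval G.Adj (1, q - 1) x) ∧
    (∀ l : ℕ, 1 ≤ l → l ≤ q - 1 → ∀ w : ℕ → V,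
      (∀ i < l, tdist G.Adj (w i) (w (i + 1)) = (1, q - 1)) →
      tdist G.Adj (w 0) (w l) = (l, q - l)) ∧
    (∀ x y z : V, tdist G.Adj x y = (2, q - 2) → tdist G.Adj y z = (q - 1, 1) →
      tdist G.Adj x z = (1, q - 1)) ∧
    (∀ r : ℕ, G.p (1, r - 1) (1, q - 1) (q - 1, 1) ≠ 0 →
      ∀ x y z : V, tdist G.Adj x y = (1, r - 1) → tdist G.Adj y z = (1, q - 1) →
        tdist G.Adj x z = (1, q - 1)) :=
  statement14_general G hls q hq hqT hpure
end
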